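/- If G is a linear 3-graph in which every vertex has degree at most 5, and G is crown-free, then |E(G)| ≤ 3n/2 where n is the number of vertices. In particular the average degree of G is at most 9/2. -/

import Mathlib

open Finset

/-- A linear 3-graph: all edges have 3 vertices and two distinct edges share at most one vertex. -/
def Linear3 {V : Type*} [DecidableEq V] (E : Finset (Finset V)) : Prop :=
  (∀ e ∈ E, e.card = 3) ∧ ∀ e ∈ E, ∀ f ∈ E, e ≠ f → (e ∩ f).card ≤ 1

/-- Degree of a vertex: the number of edges containing it. -/
def deg {V : Type*} [DecidableEq V] (E : Finset (Finset V)) (v : V) : ℕ :=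
  (E.filter fun e => v ∈ e).card

/-- A crown: four edges e = {x,y,z}, e1, e2, e3 with e1,e2,e3 pairwise disjoint and
    ei ∩ e = {x},{y},{z} respectively. -/
def HasCrown {V : Type*} [DecidableEq V] (E : Finset (Finset V)) : Prop :=
  ∃ x y z : V, ∃ e ∈ E, ∃ e1 ∈ E, ∃ e2 ∈ E, ∃ e3 ∈ E,
    x ≠ y ∧ x ≠ z ∧ y ≠ z ∧ e = {x, y, z} ∧
    Disjoint e1 e2 ∧ Disjoint e1 e3 ∧ Disjoint e2 e3 ∧
    e1 ∩ e = {x} ∧ e2 ∩ e = {y} ∧ e3 ∩ e = {z}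

/-- χ(v) = 1 if deg v ≤ 5, else 0. -/
def chi {V : Type*} [DecidableEq V] (E : Finset (Finset V)) (v : V) : ℚ :=
  if deg E v ≤ 5 then 1 else 0

/-- The set of vertices outside {x,y,z} lying on a common edge with p. -/
def nbhd {V : Type*} [DecidableEq V] (E : Finset (Finset V)) (x y z p : V) : Finset V :=
  ((E.filter fun f => p ∈ f).biUnion id) \ {x, y, z}

/-!
Discharging: give every vertex `v` the charge `9 - 2 deg v`; the total is `9n - 6|E|`. Only
degree-5 vertices are negative (charge `-1`). A degree-5 vertex with no neighbour of degree `≤ 3`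
has only degree-4 neighbours (charge `1`) and is the unique degree-5 neighbour of each of them, so
these vertices are paid injectively. Every other degree-5 vertex splits its debt evenly among its
neighbours of degree `≤ 3`; such a neighbour `u` either has at most two neighbours of degree 5,
or receives at most `1/2` from each of its at most `2 deg u` neighbours, and `9 - 2 deg u` covers
both.

The structural input, proved by exhibiting crowns, is that a degree-5 vertex `v` on an edge
`{v, a, b}` with `deg b = 5` and `deg a ≥ 4` has two neighbours of degree `≤ 3`. The basic move:
if `deg v ≥ 5` and `deg q ≥ 4`, every other edge through `p` on an edge `{v, p, q}` lies in
`{p} ∪ N(v)`, where `N(v) = nbr E v`, as otherwise it is a leg of a crown centred at `{v, p, q}`.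
Around `{v, a, b}` this ties the edges at `a`, `b` and `v` together so rigidly that for an edge
`{a, s, t}` and the edge `{v, t, t'}`, further edges at `t` and at `t'` would have to meet in one
of the four vertices of `N(v)` not yet used, and that vertex would need four edges into the other
three.
-/

section

variable {V : Type*} [DecidableEq V] {E : Finset (Finset V)}

lemma Finset.exists_eq_triple_of_card_eq_three {s : Finset V} (hs : s.card = 3) {x y : V}
    (hx : x ∈ s) (hy : y ∈ s) (hxy : x ≠ y) : ∃ z, z ≠ x ∧ z ≠ y ∧ s = {x, y, z} := by
  obtain ⟨z, hz⟩ : ∃ z, (s.erase x).erase y = {z} := by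
    rw [← card_eq_one, card_erase_of_mem (mem_erase.2 ⟨hxy.symm, hy⟩), card_erase_of_mem hx, hs]
  have hzs : z ∈ (s.erase x).erase y := hz ▸ mem_singleton_self z
  simp only [mem_erase] at hzs
  refine ⟨z, hzs.2.1, hzs.1, ?_⟩
  ext w
  by_cases hwx : w = x; · simp [hwx, hx]
  by_cases hwy : w = y; · simp [hwy, hy]
  have := congrArg (w ∈ ·) hz
  simp only [mem_erase, mem_singleton, eq_iff_iff] at this
  simp only [mem_insert, mem_singleton, hwx, hwy, false_or]
  tauto

lemma Finset.card_eq_four_of_mem_notMem {f₁ f₂ f₃ f₄ : Finset V} {p₁ p₂ p₃ : V} (h₁ : p₁ ∈ f₁)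
    (h₁₂ : p₁ ∉ f₂) (h₁₃ : p₁ ∉ f₃) (h₁₄ : p₁ ∉ f₄) (h₂ : p₂ ∈ f₂) (h₂₃ : p₂ ∉ f₃)
    (h₂₄ : p₂ ∉ f₄) (h₃ : p₃ ∈ f₃) (h₃₄ : p₃ ∉ f₄) :
    ({f₁, f₂, f₃, f₄} : Finset (Finset V)).card = 4 := by
  rw [card_insert_of_notMem, card_insert_of_notMem, card_insert_of_notMem, card_singleton]
  · simpa using ne_of_mem_of_not_mem' h₃ h₃₄
  · simpa using ⟨ne_of_mem_of_not_mem' h₂ h₂₃, ne_of_mem_of_not_mem' h₂ h₂₄⟩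
  · simpa using ⟨ne_of_mem_of_not_mem' h₁ h₁₂, ne_of_mem_of_not_mem' h₁ h₁₃,
      ne_of_mem_of_not_mem' h₁ h₁₄⟩

def nbr (E : Finset (Finset V)) (v : V) : Finset V :=
  (E.filter (v ∈ ·)).biUnion (·.erase v)

def lowNbr (E : Finset (Finset V)) (v : V) : Finset V :=
  (nbr E v).filter (deg E · ≤ 3)

lemma mem_nbr {v w : V} : w ∈ nbr E v ↔ w ≠ v ∧ ∃ f ∈ E, v ∈ f ∧ w ∈ f := by
  simp only [nbr, mem_biUnion, mem_filter, mem_erase]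
  tauto

lemma mem_nbr_comm {v w : V} : w ∈ nbr E v ↔ v ∈ nbr E w := by
  simp only [mem_nbr, ne_comm, and_comm (a := v ∈ _)]

lemma ne_of_mem_nbr_sdiff {v a b x : V} (hx : x ∈ nbr E v \ {a, b}) :
    x ≠ v ∧ x ≠ a ∧ x ≠ b := by
  simp only [mem_sdiff, mem_insert, mem_singleton, not_or] at hx
  exact ⟨(mem_nbr.1 hx.1).1, hx.2⟩

lemma sum_deg_eq_sum_card [Fintype V] : ∑ v, deg E v = ∑ e ∈ E, e.card := by
  simp only [deg, card_filter]
  rw [sum_comm]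
  simp

lemma hasCrown_of_legs {x y z : V} (he : ({x, y, z} : Finset V) ∈ E)
    (hxy : x ≠ y) (hxz : x ≠ z) (hyz : y ≠ z) {e₁ e₂ e₃ : Finset V}
    (h₁ : e₁ ∈ E) (h₂ : e₂ ∈ E) (h₃ : e₃ ∈ E) (hx : x ∈ e₁) (hy : y ∈ e₂) (hz : z ∈ e₃)
    (h₁₂ : Disjoint e₁ e₂) (h₁₃ : Disjoint e₁ e₃) (h₂₃ : Disjoint e₂ e₃) : HasCrown E := by
  have key {e : Finset V} {p : V} (hp : p ∈ e) (hps : p ∈ ({x, y, z} : Finset V))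
      (h : ∀ w ∈ ({x, y, z} : Finset V), w ∈ e → w = p) : e ∩ {x, y, z} = {p} := by
    ext w
    simp only [mem_inter, mem_singleton]
    exact ⟨fun hw => h w hw.2 hw.1, fun hw => hw ▸ ⟨hp, hps⟩⟩
  refine ⟨x, y, z, _, he, e₁, h₁, e₂, h₂, e₃, h₃, hxy, hxz, hyz, rfl, h₁₂, h₁₃, h₂₃,
    key hx (by simp) ?_, key hy (by simp) ?_, key hz (by simp) ?_⟩ <;>
  · simp only [mem_insert, mem_singleton]
    rintro w (rfl | rfl | rfl) hw <;> simp_all [disjoint_left]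

namespace Linear3

variable (hlin : Linear3 E)
include hlin

lemma eq_of_mem_of_mem {e f : Finset V} (he : e ∈ E) (hf : f ∈ E) {x y : V} (hxy : x ≠ y)
    (hxe : x ∈ e) (hye : y ∈ e) (hxf : x ∈ f) (hyf : y ∈ f) : e = f := by
  by_contra hef
  exact hxy (card_le_one.1 (hlin.2 e he f hf hef) x (by simp [hxe, hxf]) y (by simp [hye, hyf]))

lemma notMem_of_ne {e f : Finset V} (he : e ∈ E) (hf : f ∈ E) (hef : e ≠ f) {x y : V}
    (hxe : x ∈ e) (hxf : x ∈ f) (hye : y ∈ e) (hyx : y ≠ x) : y ∉ f := fun hyf =>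
  hef (hlin.eq_of_mem_of_mem he hf hyx.symm hxe hye hxf hyf)

lemma exists_eq_triple {e : Finset V} (he : e ∈ E) {x y : V} (hx : x ∈ e) (hy : y ∈ e)
    (hxy : x ≠ y) : ∃ z, z ≠ x ∧ z ≠ y ∧ e = {x, y, z} :=
  exists_eq_triple_of_card_eq_three (hlin.1 e he) hx hy hxy

lemma card_nbr (v : V) : (nbr E v).card = 2 * deg E v := by
  rw [nbr, card_biUnion, deg, mul_comm, card_eq_sum_ones, sum_mul]
  · refine sum_congr rfl fun f hf => ?_
    rw [mem_filter] at hf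
    rw [card_erase_of_mem hf.2, hlin.1 f hf.1, one_mul]
  · intro f hf g hg hfg
    simp only [coe_filter, Set.mem_ofPred_eq] at hf hg
    refine disjoint_left.2 fun w hwf hwg => ?_
    rw [mem_erase] at hwf hwg
    exact hfg (hlin.eq_of_mem_of_mem hf.1 hg.1 hwf.1.symm hf.2 hwf.2 hg.2 hwg.2)

lemma exists_triple_of_mem_nbr {v w : V} (hw : w ∈ nbr E v) :
    ∃ x, x ≠ v ∧ x ≠ w ∧ w ≠ v ∧ ({v, w, x} : Finset V) ∈ E := by
  obtain ⟨hwv, f, hf, hvf, hwf⟩ := mem_nbr.1 hw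
  obtain ⟨x, hxv, hxw, rfl⟩ := hlin.exists_eq_triple hf hvf hwf hwv.symm
  exact ⟨x, hxv, hxw, hwv, hf⟩

lemma card_filter_not_disjoint_le {v : V} {X : Finset V} (hv : v ∉ X) :
    ((E.filter (v ∈ ·)).filter (¬ Disjoint · X)).card ≤ X.card := by
  calc _ ≤ (X.biUnion fun x => E.filter fun f => v ∈ f ∧ x ∈ f).card := by
        refine card_le_card fun f hf => ?_
        simp only [mem_filter, not_disjoint_iff] at hf
        obtain ⟨⟨hfE, hvf⟩, x, hxf, hxX⟩ := hf
        exact mem_biUnion.2 ⟨x, hxX, mem_filter.2 ⟨hfE, hvf, hxf⟩⟩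
    _ ≤ ∑ x ∈ X, (E.filter fun f => v ∈ f ∧ x ∈ f).card := card_biUnion_le
    _ ≤ ∑ _x ∈ X, 1 := sum_le_sum fun x hx => card_le_one.2 fun f hf g hg => by
        simp only [mem_filter] at hf hg
        exact hlin.eq_of_mem_of_mem hf.1 hg.1 (ne_of_mem_of_not_mem hx hv).symm
          hf.2.1 hf.2.2 hg.2.1 hg.2.2
    _ = X.card := by simp

lemma exists_edge_disjoint {v : V} {X : Finset V} (hv : v ∉ X) (S : Finset (Finset V))
    (h : X.card + S.card < deg E v) : ∃ f ∈ E, v ∈ f ∧ f ∉ S ∧ Disjoint f X := by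
  set bad := (E.filter (v ∈ ·)).filter (¬ Disjoint · X)
  have hbad : bad.card ≤ X.card := hlin.card_filter_not_disjoint_le hv
  obtain ⟨f, hf⟩ : ((E.filter (v ∈ ·)) \ (S ∪ bad)).Nonempty := by
    rw [← card_pos]
    have := le_card_sdiff (S ∪ bad) (E.filter (v ∈ ·))
    have := card_union_le S bad
    unfold deg at h
    omega
  simp only [mem_sdiff, mem_union, mem_filter, bad, not_or, not_and, not_not] at hf
  exact ⟨f, hf.1.1, hf.1.2, hf.2.1, hf.2.2 hf.1⟩

lemma sum_deg [Fintype V] : ∑ v, deg E v = 3 * E.card := by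
  rw [sum_deg_eq_sum_card, sum_congr rfl hlin.1, sum_const, smul_eq_mul, mul_comm]

section CrownFree

variable (hcf : ¬ HasCrown E)
include hcf

lemma subset_insert_nbr {v p q : V} (he : ({v, p, q} : Finset V) ∈ E) (hvp : v ≠ p)
    (hvq : v ≠ q) (hpq : p ≠ q) (hv : 5 ≤ deg E v) (hq : 4 ≤ deg E q) {g : Finset V}
    (hg : g ∈ E) (hpg : p ∈ g) (hge : g ≠ {v, p, q}) : g ⊆ insert p (nbr E v) := by
  intro s hs
  by_contra hsn
  simp only [mem_insert, not_or] at hsn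
  obtain ⟨hsp, hsv⟩ := hsn
  have hvg : v ∉ g := hlin.notMem_of_ne he hg (Ne.symm hge) (by simp) hpg (by simp) hvp
  have hqg : q ∉ g := hlin.notMem_of_ne he hg (Ne.symm hge) (by simp) hpg (by simp) hpq.symm
  obtain ⟨t, hts, htp, rfl⟩ := hlin.exists_eq_triple hg hpg hs (Ne.symm hsp)
  obtain ⟨k, hk, hqk, hke, hkst⟩ := hlin.exists_edge_disjoint (v := q) (X := {s, t})
    (by simp_all) {{v, p, q}} (by rw [card_singleton]; have := card_le_two (a := s) (b := t); omega)
  rw [mem_singleton] at hke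
  have hpk := hlin.notMem_of_ne he hk (Ne.symm hke) (by simp) hqk (by simp) hpq
  have hvk := hlin.notMem_of_ne he hk (Ne.symm hke) (by simp) hqk (by simp) hvq
  obtain ⟨f, hf, hvf, hfe, hfX⟩ := hlin.exists_edge_disjoint (v := v)
    (X := insert t (k.erase q)) (by simp_all) {{v, p, q}} (by
      have := card_insert_le t (k.erase q)
      rw [card_erase_of_mem hqk, hlin.1 k hk] at this
      rw [card_singleton]; omega)
  rw [mem_singleton] at hfe
  have hpf := hlin.notMem_of_ne he hf (Ne.symm hfe) (by simp) hvf (by simp) hvp.symm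
  have hqf := hlin.notMem_of_ne he hf (Ne.symm hfe) (by simp) hvf (by simp) hvq.symm
  have hsf : s ∉ f := fun h => hsv (mem_nbr.2 ⟨fun h' => hvg (by simp [← h']), f, hf, hvf, h⟩)
  refine hcf (hasCrown_of_legs he hvp hvq hpq hf hg hk hvf hpg hqk ?_ ?_ ?_)
  · simp only [disjoint_insert_right, disjoint_singleton_right] at hfX ⊢
    exact ⟨hpf, hsf, hfX.1⟩
  · refine disjoint_right.2 fun x hx hxf => ?_
    by_cases hxq : x = q
    · exact hqf (hxq ▸ hxf)
    · exact disjoint_left.1 hfX hxf (mem_insert_of_mem (mem_erase.2 ⟨hxq, hx⟩))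
  · rw [disjoint_insert_left]
    exact ⟨hpk, disjoint_comm.1 hkst⟩

/-- If the edge at `b` through `t'` missed `s`, it would be disjoint from `{a, s, t}`, and with an
edge at `v` avoiding both it would give a crown centred at `{v, a, b}`. -/
lemma forced_edge_mem {v a b s t t' : V} (he : ({v, a, b} : Finset V) ∈ E) (hva : v ≠ a)
    (hvb : v ≠ b) (hab : a ≠ b) (hv : 5 ≤ deg E v) (hA : ({a, s, t} : Finset V) ∈ E)
    (hF : ({v, t, t'} : Finset V) ∈ E) (hs : s ∈ nbr E v \ {a, b}) (ht : t ∈ nbr E v \ {a, b})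
    (ht' : t' ∈ nbr E v \ {a, b}) (htt' : t ≠ t') (hbt' : t' ∈ nbr E b) :
    ({b, s, t'} : Finset V) ∈ E := by
  simp only [mem_sdiff, mem_insert, mem_singleton, not_or, mem_nbr] at hs ht ht'
  obtain ⟨y, hyb, hyt', -, hB⟩ := hlin.exists_triple_of_mem_nbr hbt'
  by_contra hnot
  have hys : y ≠ s := by rintro rfl; exact hnot (by rwa [pair_comm])
  have hye : y ∉ ({v, a} : Finset V) := fun hy => by
    have hyb' : y ≠ b := hyb
    have := hlin.eq_of_mem_of_mem hB he hyb'.symm (by simp) (by simp) (by simp) (by simp_all)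
    have ht'e : t' ∈ ({v, a, b} : Finset V) := this ▸ by simp
    simp only [mem_insert, mem_singleton] at ht'e
    tauto
  simp only [mem_insert, mem_singleton, not_or] at hye
  have hyt : y ≠ t := fun h => by
    have := hlin.eq_of_mem_of_mem hB hF htt'.symm (by simp) (by simp [h]) (by simp) (by simp)
    have hbF : b ∈ ({v, t, t'} : Finset V) := this ▸ by simp
    simp only [mem_insert, mem_singleton] at hbF
    rcases hbF with h | h | h
    exacts [hvb h.symm, ht.2.2 h.symm, ht'.2.2 h.symm]
  have hst' : s ≠ t' := fun h => by
    have := hlin.eq_of_mem_of_mem hA hF htt' (by simp) (by simp [h]) (by simp) (by simp)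
    have hvA : v ∈ ({a, s, t} : Finset V) := this ▸ by simp
    simp only [mem_insert, mem_singleton] at hvA
    rcases hvA with h | h | h
    exacts [hva h, hs.1.1 h.symm, ht.1.1 h.symm]
  obtain ⟨f, hf, hvf, hfS, hfX⟩ := hlin.exists_edge_disjoint (v := v) (X := {s, y})
    (by simp [Ne.symm hye.1, hs.1.1.symm]) {{v, a, b}, {v, t, t'}} (by
      have := card_le_two (a := s) (b := y)
      have := card_le_two (a := ({v, a, b} : Finset V)) (b := {v, t, t'})
      omega)
  simp only [mem_insert, mem_singleton, not_or] at hfS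
  have hef {x : V} (hx : x ∈ ({v, a, b} : Finset V)) (hxv : x ≠ v) : x ∉ f :=
    hlin.notMem_of_ne he hf (Ne.symm hfS.1) (by simp) hvf hx hxv
  have hFf {x : V} (hx : x ∈ ({v, t, t'} : Finset V)) (hxv : x ≠ v) : x ∉ f :=
    hlin.notMem_of_ne hF hf (Ne.symm hfS.2) (by simp) hvf hx hxv
  refine hcf (hasCrown_of_legs he hva hvb hab hf hA hB hvf (by simp) (by simp) ?_ ?_ ?_)
  · simp only [disjoint_insert_right, disjoint_singleton_right] at hfX ⊢
    exact ⟨hef (by simp) hva.symm, hfX.1, hFf (by simp) ht.1.1⟩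
  · simp only [disjoint_insert_right, disjoint_singleton_right] at hfX ⊢
    exact ⟨hef (by simp) hvb.symm, hFf (by simp) ht'.1.1, hfX.2⟩
  · simp only [disjoint_insert_left, disjoint_insert_right, mem_insert, mem_singleton,
      disjoint_singleton_left, not_or]
    exact ⟨⟨hab.symm, Ne.symm hs.2.2, Ne.symm ht.2.2⟩, ⟨ht'.2.1, hst'.symm, htt'.symm⟩,
      Ne.symm hye.2, hys.symm, hyt.symm⟩

lemma sdiff_subset_nbr {v a b : V} (he : ({v, a, b} : Finset V) ∈ E) (hva : v ≠ a)
    (hvb : v ≠ b) (hab : a ≠ b) (hv : deg E v = 5) (hb : 5 ≤ deg E b) (ha : 4 ≤ deg E a) :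
    nbr E v \ {a, b} ⊆ nbr E b := by
  have hbN : b ∈ nbr E v := mem_nbr.2 ⟨hvb.symm, _, he, by simp, by simp⟩
  have hvN : v ∉ nbr E v := fun h => (mem_nbr.1 h).1 rfl
  have hsub : nbr E b ⊆ (insert v (nbr E v)).erase b := by
    intro w hw
    obtain ⟨hwb, g, hg, hbg, hwg⟩ := mem_nbr.1 hw
    refine mem_erase.2 ⟨hwb, ?_⟩
    by_cases hge : g = {v, b, a}
    · subst hge
      simp only [mem_insert, mem_singleton] at hwg
      rcases hwg with rfl | rfl | rfl
      · exact mem_insert_self _ _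
      · exact absurd rfl hwb
      · exact mem_insert_of_mem (mem_nbr.2 ⟨hva.symm, _, he, by simp, by simp⟩)
    · have := hlin.subset_insert_nbr hcf (by rwa [pair_comm]) hvb hva hab.symm hv.ge ha hg hbg
        hge hwg
      exact mem_insert_of_mem ((mem_insert.1 this).resolve_left hwb)
  have heq := eq_of_subset_of_card_le hsub (by
    rw [card_erase_of_mem (mem_insert_of_mem hbN), card_insert_of_notMem hvN,
      hlin.card_nbr, hlin.card_nbr, hv]
    omega)
  intro w hw
  rw [mem_sdiff, mem_insert, mem_singleton, not_or] at hw
  rw [heq]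
  exact mem_erase.2 ⟨hw.2.2, mem_insert_of_mem hw.1⟩

end CrownFree

end Linear3

/-- The configuration around `{v, a, b}` in which two low-degree neighbours of `v` are found;
crown-freeness adds the edges `{b, s, t'}` and `{b, t, s'}` (`Frame.edge_bst'`). -/
structure Frame (E : Finset (Finset V)) (v a b s s' t t' : V) : Prop where
  edge_vab : ({v, a, b} : Finset V) ∈ E
  edge_ast : ({a, s, t} : Finset V) ∈ E
  edge_vss' : ({v, s, s'} : Finset V) ∈ E
  edge_vtt' : ({v, t, t'} : Finset V) ∈ E
  v_ne_a : v ≠ a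
  v_ne_b : v ≠ b
  a_ne_b : a ≠ b
  s_ne_t : s ≠ t
  s_ne_s' : s ≠ s'
  t_ne_t' : t ≠ t'
  s_mem : s ∈ nbr E v \ {a, b}
  s'_mem : s' ∈ nbr E v \ {a, b}
  t_mem : t ∈ nbr E v \ {a, b}
  t'_mem : t' ∈ nbr E v \ {a, b}

namespace Frame

variable {v a b s s' t t' : V}

lemma symm (h : Frame E v a b s s' t t') : Frame E v a b t t' s s' :=
  ⟨h.edge_vab, by rw [pair_comm]; exact h.edge_ast, h.edge_vtt', h.edge_vss', h.v_ne_a, h.v_ne_b,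
    h.a_ne_b, h.s_ne_t.symm, h.t_ne_t', h.s_ne_s', h.t_mem, h.t'_mem, h.s_mem, h.s'_mem⟩

section Linear

variable (h : Frame E v a b s s' t t') (hlin : Linear3 E)
include h hlin

lemma s_ne_t' : s ≠ t' := by
  intro hst'
  have hvA : v ∉ ({a, s, t} : Finset V) := by
    simp [h.v_ne_a, (ne_of_mem_nbr_sdiff h.s_mem).1.symm, (ne_of_mem_nbr_sdiff h.t_mem).1.symm]
  exact hlin.notMem_of_ne h.edge_ast h.edge_vtt' (ne_of_mem_of_not_mem' (by simp) hvA).symm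
    (by simp) (by simp) (by simp) h.s_ne_t (by simp [hst'])

lemma s'_ne_t' : s' ≠ t' := by
  intro hst'
  have := hlin.eq_of_mem_of_mem h.edge_vss' h.edge_vtt' (ne_of_mem_nbr_sdiff h.s'_mem).1.symm
    (by simp) (by simp) (by simp) (by simp [hst'])
  have hsF : s ∈ ({v, t, t'} : Finset V) := this ▸ by simp
  simp only [mem_insert, mem_singleton] at hsF
  exact hsF.elim (ne_of_mem_nbr_sdiff h.s_mem).1 (Or.elim · h.s_ne_t (h.s_ne_t' hlin))

lemma card_sdiff_le (hv : deg E v = 5) : (nbr E v \ {v, a, b, s, s', t, t'}).card ≤ 4 := by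
  have hP : ({a, b, s, s', t, t'} : Finset V).card = 6 := by
    have := h.s_ne_t' hlin; have := (h.symm.s_ne_t' hlin).symm; have := h.s'_ne_t' hlin
    have := ne_of_mem_nbr_sdiff h.s_mem; have := ne_of_mem_nbr_sdiff h.s'_mem
    have := ne_of_mem_nbr_sdiff h.t_mem; have := ne_of_mem_nbr_sdiff h.t'_mem
    have := h.a_ne_b; have := h.s_ne_t; have := h.s_ne_s'; have := h.t_ne_t'
    grind
  have hsub : {a, b, s, s', t, t'} ∪ (nbr E v \ {v, a, b, s, s', t, t'}) ⊆ nbr E v := by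
    refine union_subset ?_ sdiff_subset
    simp only [insert_subset_iff, singleton_subset_iff]
    exact ⟨mem_nbr.2 ⟨h.v_ne_a.symm, _, h.edge_vab, by simp, by simp⟩,
      mem_nbr.2 ⟨h.v_ne_b.symm, _, h.edge_vab, by simp, by simp⟩, (mem_sdiff.1 h.s_mem).1,
      (mem_sdiff.1 h.s'_mem).1, (mem_sdiff.1 h.t_mem).1, (mem_sdiff.1 h.t'_mem).1⟩
  have := card_le_card hsub
  rw [card_union_of_disjoint (by simp [disjoint_left]), hlin.card_nbr, hv, hP] at this
  omega

lemma mem_of_edge_v {z z' : V} (hz : z ∈ nbr E v \ {v, a, b, s, s', t, t'})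
    (hF : ({v, z, z'} : Finset V) ∈ E) (hz'v : z' ≠ v) :
    z' ∈ nbr E v \ {v, a, b, s, s', t, t'} := by
  rw [mem_sdiff] at hz ⊢
  refine ⟨mem_nbr.2 ⟨hz'v, _, hF, by simp, by simp⟩, ?_⟩
  have key {g : Finset V} (hg : g ∈ E) (hvg : v ∈ g) (hzg : z ∉ g) : z' ∉ g :=
    hlin.notMem_of_ne hF hg (ne_of_mem_of_not_mem' (by simp) hzg) (by simp) hvg (by simp) hz'v
  have h1 := key h.edge_vab (by simp) (fun h' => hz.2 (by simp_all))
  have h2 := key h.edge_vss' (by simp) (fun h' => hz.2 (by simp_all))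
  have h3 := key h.edge_vtt' (by simp) (fun h' => hz.2 (by simp_all))
  simp only [mem_insert, mem_singleton, not_or] at h1 h2 h3 ⊢
  tauto

end Linear

variable (h : Frame E v a b s s' t t') (hlin : Linear3 E) (hcf : ¬ HasCrown E)
  (hv : deg E v = 5) (hb : 5 ≤ deg E b) (ha : 4 ≤ deg E a)
include h hlin hcf hv hb ha

lemma edge_bst' : ({b, s, t'} : Finset V) ∈ E :=
  hlin.forced_edge_mem hcf h.edge_vab h.v_ne_a h.v_ne_b h.a_ne_b hv.ge h.edge_ast h.edge_vtt'
    h.s_mem h.t_mem h.t'_mem h.t_ne_t'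
    (hlin.sdiff_subset_nbr hcf h.edge_vab h.v_ne_a h.v_ne_b h.a_ne_b hv hb ha h.t'_mem)

lemma eq_s'_of_edge {y : V} (hy : y ∈ nbr E v \ {a, b}) (hA : ({a, y, t'} : Finset V) ∈ E) :
    y = s' := by
  obtain ⟨htv, -, htb⟩ := ne_of_mem_nbr_sdiff h.t_mem
  have hyt : y ≠ t := by
    rintro rfl
    have := hlin.eq_of_mem_of_mem hA h.edge_vtt' h.t_ne_t' (by simp) (by simp) (by simp) (by simp)
    have hvA : v ∈ ({a, y, t'} : Finset V) := this ▸ by simp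
    simp only [mem_insert, mem_singleton] at hvA
    exact hvA.elim h.v_ne_a (Or.elim · htv.symm (ne_of_mem_nbr_sdiff h.t'_mem).1.symm)
  have hbyt := hlin.forced_edge_mem hcf h.edge_vab h.v_ne_a h.v_ne_b h.a_ne_b hv.ge hA
    (by rw [pair_comm]; exact h.edge_vtt') hy h.t'_mem h.t_mem h.t_ne_t'.symm
    (hlin.sdiff_subset_nbr hcf h.edge_vab h.v_ne_a h.v_ne_b h.a_ne_b hv hb ha h.t_mem)
  have hyB : y ∈ ({b, t, s'} : Finset V) :=
    hlin.eq_of_mem_of_mem hbyt (h.symm.edge_bst' hlin hcf hv hb ha) htb.symm (by simp) (by simp)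
      (by simp) (by simp) ▸ by simp
  simp only [mem_insert, mem_singleton] at hyB
  exact hyB.resolve_left (ne_of_mem_nbr_sdiff hy).2.2 |>.resolve_left hyt

lemma exists_edge_at_t (ht : 4 ≤ deg E t) (ht' : 4 ≤ deg E t') :
    ∃ m ∈ E, t ∈ m ∧ m ⊆ insert t (nbr E v \ {v, a, b, s, s', t, t'}) := by
  have hBt := h.symm.edge_bst' hlin hcf hv hb ha
  obtain ⟨m, hm, htm, hmS, -⟩ := hlin.exists_edge_disjoint (v := t) (X := ∅) (by simp)
    {{v, t, t'}, {a, s, t}, {b, t, s'}} (by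
      have := card_le_three (a := ({v, t, t'} : Finset V)) (b := {a, s, t}) (c := {b, t, s'})
      simp only [card_empty]; omega)
  simp only [mem_insert, mem_singleton, not_or] at hmS
  have hmN := hlin.subset_insert_nbr hcf h.edge_vtt' (ne_of_mem_nbr_sdiff h.t_mem).1.symm
    (ne_of_mem_nbr_sdiff h.t'_mem).1.symm h.t_ne_t' hv.ge ht' hm htm hmS.1
  refine ⟨m, hm, htm, fun x hx => ?_⟩
  by_cases hxt : x = t
  · exact hxt ▸ mem_insert_self _ _
  have h1 := hlin.notMem_of_ne hm h.edge_vtt' hmS.1 htm (by simp) hx hxt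
  have h2 := hlin.notMem_of_ne hm h.edge_ast hmS.2.1 htm (by simp) hx hxt
  have h3 := hlin.notMem_of_ne hm hBt hmS.2.2 htm (by simp) hx hxt
  simp only [mem_insert, mem_singleton, not_or] at h1 h2 h3
  refine mem_insert_of_mem (mem_sdiff.2 ⟨(mem_insert.1 (hmN hx)).resolve_left hxt, ?_⟩)
  simp only [mem_insert, mem_singleton, not_or]
  exact ⟨h1.1, h2.1, h3.1, h2.2.1, h3.2.2, hxt, h1.2.2⟩

lemma exists_edge_at_t' (ht : 4 ≤ deg E t) (ht' : 4 ≤ deg E t') :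
    ∃ n ∈ E, t' ∈ n ∧ n ⊆ insert t' (nbr E v \ {v, a, b, s, s', t, t'}) := by
  have hBs := h.edge_bst' hlin hcf hv hb ha
  have hFt : ({v, t', t} : Finset V) ∈ E := by rw [pair_comm]; exact h.edge_vtt'
  obtain ⟨ht'v, ht'a, -⟩ := ne_of_mem_nbr_sdiff h.t'_mem
  -- at most one edge at `t'` contains `s'`, so one of the two spare edges at `t'` avoids it
  obtain ⟨n, hn, ht'n, hnS, hns'⟩ := hlin.exists_edge_disjoint (v := t') (X := {s'})
    (by simpa using (h.s'_ne_t' hlin).symm) {{v, t', t}, {b, s, t'}} (by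
      have := card_le_two (a := ({v, t', t} : Finset V)) (b := {b, s, t'})
      simp only [card_singleton]; omega)
  simp only [mem_insert, mem_singleton, not_or] at hnS
  rw [disjoint_singleton_right] at hns'
  have hnN := hlin.subset_insert_nbr hcf hFt ht'v.symm (ne_of_mem_nbr_sdiff h.t_mem).1.symm
    h.t_ne_t'.symm hv.ge ht hn ht'n hnS.1
  have hnF {x : V} (hx : x ∈ n) (hxt' : x ≠ t') :=
    hlin.notMem_of_ne hn hFt hnS.1 ht'n (by simp) hx hxt'
  have hnB {x : V} (hx : x ∈ n) (hxt' : x ≠ t') :=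
    hlin.notMem_of_ne hn hBs hnS.2 ht'n (by simp) hx hxt'
  have han : a ∉ n := by
    intro han
    obtain ⟨y, hyt', hya, rfl⟩ := hlin.exists_eq_triple hn ht'n han ht'a
    have hy : y ∈ nbr E v \ {a, b} := by
      have hyB := hnB (by simp) hyt'
      simp only [mem_sdiff, mem_insert, mem_singleton, not_or] at hyB ⊢
      exact ⟨(mem_insert.1 (hnN (by simp))).resolve_left hyt', hya, hyB.1⟩
    have hA : ({a, y, t'} : Finset V) ∈ E := by
      convert hn using 1
      ext
      simp only [mem_insert, mem_singleton]
      tauto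
    exact hns' (by rw [← h.eq_s'_of_edge hlin hcf hv hb ha hy hA]; simp)
  refine ⟨n, hn, ht'n, fun x hx => ?_⟩
  by_cases hxt' : x = t'
  · exact hxt' ▸ mem_insert_self _ _
  have h1 := hnF hx hxt'
  have h2 := hnB hx hxt'
  simp only [mem_insert, mem_singleton, not_or] at h1 h2
  refine mem_insert_of_mem (mem_sdiff.2 ⟨(mem_insert.1 (hnN hx)).resolve_left hxt', ?_⟩)
  simp only [mem_insert, mem_singleton, not_or]
  exact ⟨h1.1, fun h => han (h ▸ hx), h2.1, h2.2.1, fun h => hns' (h ▸ hx), h1.2.2, hxt'⟩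

lemma mem_of_edge_b {z w : V} (hz : z ∈ nbr E v \ {v, a, b, s, s', t, t'})
    (hB : ({b, z, w} : Finset V) ∈ E) (hwb : w ≠ b) :
    w ∈ nbr E v \ {v, a, b, s, s', t, t'} := by
  rw [mem_sdiff] at hz ⊢
  have key {g : Finset V} (hg : g ∈ E) (hbg : b ∈ g) (hzg : z ∉ g) : w ∉ g :=
    hlin.notMem_of_ne hB hg (ne_of_mem_of_not_mem' (by simp) hzg) (by simp) hbg (by simp) hwb
  have h1 := key h.edge_vab (by simp) (fun h' => hz.2 (by simp_all))
  have h2 := key (h.edge_bst' hlin hcf hv hb ha) (by simp) (fun h' => hz.2 (by simp_all))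
  have h3 := key (h.symm.edge_bst' hlin hcf hv hb ha) (by simp) (fun h' => hz.2 (by simp_all))
  have hBN := hlin.subset_insert_nbr hcf (by rw [pair_comm]; exact h.edge_vab) h.v_ne_b h.v_ne_a
    h.a_ne_b.symm hv.ge ha hB (by simp) (ne_of_mem_of_not_mem' (a := z) (by simp) fun h' => hz.2 (by
      simp only [mem_insert, mem_singleton] at h' ⊢; tauto))
  refine ⟨(mem_insert.1 (hBN (by simp))).resolve_left hwb, ?_⟩
  simp only [mem_insert, mem_singleton, not_or] at h1 h2 h3 ⊢
  tauto

lemma no_common_neighbour {x y z : V} (hz : z ∈ nbr E v \ {v, a, b, s, s', t, t'})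
    (hx : x ∈ nbr E v \ {v, a, b, s, s', t, t'}) (hy : y ∈ nbr E v \ {v, a, b, s, s', t, t'})
    (hxz : x ≠ z) (hyz : y ≠ z) (hm : ({t, z, x} : Finset V) ∈ E)
    (hn : ({t', z, y} : Finset V) ∈ E) : False := by
  obtain ⟨z', hz'v, hz'z, -, hFz⟩ := hlin.exists_triple_of_mem_nbr (mem_sdiff.1 hz).1
  obtain ⟨w, hwb, hwz, -, hBz⟩ := hlin.exists_triple_of_mem_nbr
    (hlin.sdiff_subset_nbr hcf h.edge_vab h.v_ne_a h.v_ne_b h.a_ne_b hv hb ha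
      (sdiff_subset_sdiff le_rfl (by simp [insert_subset_iff]) hz))
  have hz' := h.mem_of_edge_v hlin hz hFz hz'v
  have hw := h.mem_of_edge_b hlin hcf hv hb ha hz hBz hwb
  -- four distinct edges at `z`, each meeting a set of at most three vertices
  have hsub : ({{v, z, z'}, {b, z, w}, {t, z, x}, {t', z, y}} : Finset (Finset V)) ⊆
      (E.filter (z ∈ ·)).filter (¬ Disjoint · ((nbr E v \ {v, a, b, s, s', t, t'}).erase z)) := by
    simp only [insert_subset_iff, singleton_subset_iff, mem_filter, not_disjoint_iff, mem_erase]
    exact ⟨⟨⟨hFz, by simp⟩, z', by simp, hz'z, hz'⟩, ⟨⟨hBz, by simp⟩, w, by simp, hwz, hw⟩,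
      ⟨⟨hm, by simp⟩, x, by simp, hxz, hx⟩, ⟨⟨hn, by simp⟩, y, by simp, hyz, hy⟩⟩
  have hcard : ({{v, z, z'}, {b, z, w}, {t, z, x}, {t', z, y}} : Finset (Finset V)).card = 4 := by
    simp only [mem_sdiff, mem_insert, mem_singleton, not_or] at hz hx hy hw
    have := h.v_ne_b; have := h.t_ne_t'
    have := ne_of_mem_nbr_sdiff h.t_mem; have := ne_of_mem_nbr_sdiff h.t'_mem
    exact card_eq_four_of_mem_notMem (p₁ := v) (p₂ := b) (p₃ := t) (by simp) (by grind)
      (by grind) (by grind) (by simp) (by grind) (by grind) (by simp) (by grind)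
  have := (card_le_card hsub).trans (hlin.card_filter_not_disjoint_le (notMem_erase z _))
  have := h.card_sdiff_le hlin hv
  rw [card_erase_of_mem hz] at *
  omega

lemma deg_le_three (ht : 4 ≤ deg E t) : deg E t' ≤ 3 := by
  by_contra! ht'
  obtain ⟨m, hm, htm, hmW⟩ := h.exists_edge_at_t hlin hcf hv hb ha ht ht'
  obtain ⟨n, hn, ht'n, hnW⟩ := h.exists_edge_at_t' hlin hcf hv hb ha ht ht'
  have hout {p : V} {g : Finset V} (hg : g ⊆ insert p (nbr E v \ {v, a, b, s, s', t, t'}))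
      {x : V} (hx : x ∈ ({v, a, b, s, s', t, t'} : Finset V)) (hxp : x ≠ p) : x ∉ g :=
    fun hxg => ((mem_insert.1 (hg hxg)).resolve_left hxp |> mem_sdiff.1).2 hx
  obtain ⟨htv, hta, htb⟩ := ne_of_mem_nbr_sdiff h.t_mem
  obtain ⟨ht'v, ht'a, ht'b⟩ := ne_of_mem_nbr_sdiff h.t'_mem
  obtain ⟨z, hz⟩ : (m ∩ n).Nonempty := by
    rw [← not_disjoint_iff_nonempty_inter]
    intro hmn
    refine hcf (hasCrown_of_legs h.edge_vtt' htv.symm ht'v.symm h.t_ne_t' h.edge_vab hm hn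
      (by simp) htm ht'n ?_ ?_ hmn)
    · simp only [disjoint_insert_left, disjoint_singleton_left]
      exact ⟨hout hmW (by simp) htv.symm, hout hmW (by simp) hta.symm,
        hout hmW (by simp) htb.symm⟩
    · simp only [disjoint_insert_left, disjoint_singleton_left]
      exact ⟨hout hnW (by simp) ht'v.symm, hout hnW (by simp) ht'a.symm,
        hout hnW (by simp) ht'b.symm⟩
  obtain ⟨hzm, hzn⟩ := mem_inter.1 hz
  have hzt : z ≠ t := fun hzt => hout hnW (by simp) h.t_ne_t' (hzt ▸ hzn)
  have hzW := (mem_insert.1 (hmW hzm)).resolve_left hzt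
  have hzt' : z ≠ t' := fun hzt' => (mem_sdiff.1 hzW).2 (by simp [hzt'])
  obtain ⟨x, hxt, hxz, rfl⟩ := hlin.exists_eq_triple hm htm hzm (Ne.symm hzt)
  obtain ⟨y, hyt', hyz, rfl⟩ := hlin.exists_eq_triple hn ht'n hzn (Ne.symm hzt')
  exact h.no_common_neighbour hlin hcf hv hb ha hzW
    ((mem_insert.1 (hmW (by simp))).resolve_left hxt)
    ((mem_insert.1 (hnW (by simp))).resolve_left hyt') hxz hyz hm hn

lemma mem_lowNbr_or_mem_lowNbr : t ∈ lowNbr E v ∨ t' ∈ lowNbr E v := by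
  simp only [lowNbr, mem_filter]
  by_cases ht : 4 ≤ deg E t
  · exact Or.inr ⟨(mem_sdiff.1 h.t'_mem).1, h.deg_le_three hlin hcf hv hb ha ht⟩
  · exact Or.inl ⟨(mem_sdiff.1 h.t_mem).1, by omega⟩

end Frame

namespace Linear3

variable (hlin : Linear3 E) (hcf : ¬ HasCrown E)
include hlin hcf

lemma exists_frame {v a b : V} (he : ({v, a, b} : Finset V) ∈ E) (hva : v ≠ a) (hvb : v ≠ b)
    (hab : a ≠ b) (hv : 5 ≤ deg E v) (hb : 4 ≤ deg E b) (ha : 2 ≤ deg E a) :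
    ∃ s s' t t', Frame E v a b s s' t t' := by
  obtain ⟨A, hA, haA, hAe, -⟩ := hlin.exists_edge_disjoint (v := a) (X := ∅) (by simp)
    {{v, a, b}} (by rw [card_empty, card_singleton]; omega)
  rw [mem_singleton] at hAe
  have hAN := hlin.subset_insert_nbr hcf he hva hvb hab hv hb hA haA hAe
  have hbA := hlin.notMem_of_ne he hA (Ne.symm hAe) (by simp) haA (by simp) hab.symm
  have hW {x : V} (hx : x ∈ A) (hxa : x ≠ a) : x ∈ nbr E v \ {a, b} := by
    simp only [mem_sdiff, mem_insert, mem_singleton, not_or]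
    exact ⟨(mem_insert.1 (hAN hx)).resolve_left hxa, hxa, fun h => hbA (h ▸ hx)⟩
  have hpartner {x x' : V} (hx : x ∈ nbr E v \ {a, b}) (hF : ({v, x, x'} : Finset V) ∈ E)
      (hx'v : x' ≠ v) : x' ∈ nbr E v \ {a, b} := by
    have hxe : x ∉ ({v, a, b} : Finset V) := by
      obtain ⟨hxv, hxa, hxb⟩ := ne_of_mem_nbr_sdiff hx
      simp [hxv, hxa, hxb]
    have := hlin.notMem_of_ne hF he (ne_of_mem_of_not_mem' (by simp) hxe) (by simp) (by simp)
      (by simp) hx'v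
    simp only [mem_sdiff, mem_insert, mem_singleton, not_or] at this ⊢
    exact ⟨mem_nbr.2 ⟨hx'v, _, hF, by simp, by simp⟩, this.2⟩
  obtain ⟨s, hsA, hsa⟩ := exists_mem_ne (by rw [hlin.1 A hA]; omega) a
  obtain ⟨t, hta, hts, rfl⟩ := hlin.exists_eq_triple hA haA hsA hsa.symm
  have hs := hW hsA hsa
  have ht := hW (by simp) hta
  obtain ⟨s', hs'v, hs's, -, hFs⟩ := hlin.exists_triple_of_mem_nbr (mem_sdiff.1 hs).1
  obtain ⟨t', ht'v, ht't, -, hFt⟩ := hlin.exists_triple_of_mem_nbr (mem_sdiff.1 ht).1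
  exact ⟨s, s', t, t', he, hA, hFs, hFt, hva, hvb, hab, hts.symm, hs's.symm, ht't.symm, hs,
    hpartner hs hFs hs'v, ht, hpartner ht hFt ht'v⟩

lemma two_le_card_lowNbr {v a b : V} (he : ({v, a, b} : Finset V) ∈ E) (hva : v ≠ a)
    (hvb : v ≠ b) (hab : a ≠ b) (hv : deg E v = 5) (hb : 5 ≤ deg E b) (ha : 4 ≤ deg E a) :
    2 ≤ (lowNbr E v).card := by
  obtain ⟨s, s', t, t', h⟩ := hlin.exists_frame hcf he hva hvb hab hv.ge (by omega) (by omega)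
  have hst := h.s_ne_t
  have hst' := h.s_ne_t' hlin
  have hs't : s' ≠ t := (h.symm.s_ne_t' hlin).symm
  have hs't' := h.s'_ne_t' hlin
  rcases h.mem_lowNbr_or_mem_lowNbr hlin hcf hv hb ha with hx | hx <;>
  rcases h.symm.mem_lowNbr_or_mem_lowNbr hlin hcf hv hb ha with hy | hy <;>
  exact one_lt_card.2 ⟨_, hy, _, hx, by assumption⟩

lemma deg_le_three_of_five_le_deg {v w x : V} (hF : ({v, w, x} : Finset V) ∈ E) (hvw : v ≠ w)
    (hvx : v ≠ x) (hwx : w ≠ x) (hv : deg E v = 5) (hlow : (lowNbr E v).card ≤ 1)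
    (hw : 5 ≤ deg E w) : deg E x ≤ 3 := by
  by_contra! hx
  have := hlin.two_le_card_lowNbr hcf (by rwa [pair_comm]) hvx hvw hwx.symm hv hw hx
  omega

lemma deg_eq_four_of_lowNbr_eq_empty {v w : V} (hv : deg E v = 5)
    (hlow : lowNbr E v = ∅) (hw : w ∈ nbr E v) : deg E w = 4 := by
  have hnot {x : V} (hx : x ∈ nbr E v) : 4 ≤ deg E x := by
    by_contra! h
    have : x ∈ lowNbr E v := mem_filter.2 ⟨hx, by omega⟩
    simp [hlow] at this
  obtain ⟨x, hxv, hxw, hwv, hF⟩ := hlin.exists_triple_of_mem_nbr hw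
  refine le_antisymm ?_ (hnot hw)
  by_contra! h5
  have := hlin.deg_le_three_of_five_le_deg hcf hF hwv.symm hxv.symm hxw.symm hv (by simp [hlow]) h5
  have := hnot (mem_nbr.2 ⟨hxv, _, hF, by simp, by simp⟩)
  omega

lemma eq_of_lowNbr_eq_empty {v w x : V} (hv : deg E v = 5) (hlow : lowNbr E v = ∅)
    (hw : w ∈ nbr E v) (hx : x ∈ nbr E w) (hx5 : 5 ≤ deg E x) :
    x = v := by
  obtain ⟨w', hw'v, hw'w, hwv, hF⟩ := hlin.exists_triple_of_mem_nbr hw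
  have hw' := hlin.deg_eq_four_of_lowNbr_eq_empty hcf hv hlow
    (mem_nbr.2 ⟨hw'v, _, hF, by simp, by simp⟩)
  obtain ⟨hxw, g, hg, hwg, hxg⟩ := mem_nbr.1 hx
  by_cases hgF : g = {v, w, w'}
  · subst hgF
    simp only [mem_insert, mem_singleton] at hxg
    rcases hxg with rfl | rfl | rfl
    exacts [rfl, absurd rfl hxw, by omega]
  · have := hlin.subset_insert_nbr hcf hF hwv.symm hw'v.symm hw'w.symm hv.ge hw'.ge hg hwg hgF hxg
    have := hlin.deg_eq_four_of_lowNbr_eq_empty hcf hv hlow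
      ((mem_insert.1 this).resolve_left hxw)
    omega

lemma card_filter_deg_eq_five_le_two {v u : V} (hv : deg E v = 5) (hlow : lowNbr E v = {u}) :
    ((nbr E u).filter (deg E · = 5)).card ≤ 2 := by
  have hu : u ∈ lowNbr E v := by simp [hlow]
  simp only [lowNbr, mem_filter] at hu
  obtain ⟨a, hav, hau, huv, hF⟩ := hlin.exists_triple_of_mem_nbr hu.1
  have ha : 4 ≤ deg E a := by
    by_contra! h
    have : a ∈ lowNbr E v := mem_filter.2 ⟨mem_nbr.2 ⟨hav, _, hF, by simp, by simp⟩, by omega⟩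
    simp [hlow, hau] at this
  refine (card_le_card fun x hx => ?_).trans (card_le_two (a := v) (b := a))
  obtain ⟨hxN, hx5⟩ := mem_filter.1 hx
  obtain ⟨hxu, g, hg, hug, hxg⟩ := mem_nbr.1 hxN
  by_cases hgF : g = {v, u, a}
  · subst hgF
    simp only [mem_insert, mem_singleton] at hxg ⊢
    tauto
  have hxv := hlin.subset_insert_nbr hcf hF huv.symm hav.symm hau.symm hv.ge ha hg hug hgF hxg
  obtain ⟨x', hx'v, hx'x, hxv, hFx⟩ :=
    hlin.exists_triple_of_mem_nbr ((mem_insert.1 hxv).resolve_left hxu)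
  have hx' : x' ∈ lowNbr E v := mem_filter.2 ⟨mem_nbr.2 ⟨hx'v, _, hFx, by simp, by simp⟩,
    hlin.deg_le_three_of_five_le_deg hcf hFx hxv.symm hx'v.symm hx'x.symm hv (by simp [hlow])
      hx5.ge⟩
  rw [hlow, mem_singleton] at hx'
  subst hx'
  have := hlin.eq_of_mem_of_mem hFx hF hx'v.symm (by simp) (by simp) (by simp) (by simp)
  have hxF : x ∈ ({v, x', a} : Finset V) := this ▸ by simp
  simp only [mem_insert, mem_singleton] at hxF ⊢
  tauto

section Fintype

variable [Fintype V]

lemma card_lowNbr_eq_empty_le :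
    ((univ.filter (deg E · = 5)).filter (lowNbr E · = ∅)).card ≤
      (univ.filter (deg E · = 4)).card := by
  refine card_le_card_of_forall_subsingleton (fun v w => w ∈ nbr E v) (fun v hv => ?_)
    fun w hw v₁ hv₁ v₂ hv₂ => ?_
  · simp only [mem_filter, mem_univ, true_and] at hv ⊢
    obtain ⟨w, hw⟩ : (nbr E v).Nonempty := by
      rw [← card_pos, hlin.card_nbr, hv.1]; omega
    exact ⟨w, hlin.deg_eq_four_of_lowNbr_eq_empty hcf hv.1 hv.2 hw, hw⟩
  · simp only [mem_filter, mem_univ, true_and, Set.mem_ofPred_eq] at hv₁ hv₂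
    exact hlin.eq_of_lowNbr_eq_empty hcf hv₂.1.1 hv₂.1.2 hv₂.2 (mem_nbr_comm.1 hv₁.2)
      hv₁.1.1.ge

lemma sum_inv_card_lowNbr_le {u : V} (hu : deg E u ≤ 3) :
    ∑ v ∈ univ.filter (fun v => deg E v = 5 ∧ u ∈ lowNbr E v), ((lowNbr E v).card : ℚ)⁻¹ ≤
      9 - 2 * deg E u := by
  set S := univ.filter (fun v => deg E v = 5 ∧ u ∈ lowNbr E v)
  have hS : S ⊆ (nbr E u).filter (deg E · = 5) := fun v hv => by
    simp only [S, lowNbr, mem_filter, mem_univ, true_and] at hv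
    exact mem_filter.2 ⟨mem_nbr_comm.1 hv.2.1, hv.1⟩
  have hu' : (deg E u : ℚ) ≤ 3 := by exact_mod_cast hu
  by_cases hone : ∃ v ∈ S, lowNbr E v = {u}
  · obtain ⟨v₀, hv₀, hv₀u⟩ := hone
    have h2 : S.card ≤ 2 := (card_le_card hS).trans
      (hlin.card_filter_deg_eq_five_le_two hcf (mem_filter.1 hv₀).2.1 hv₀u)
    calc _ ≤ ∑ _v ∈ S, (1 : ℚ) := sum_le_sum fun v hv => inv_le_one_of_one_le₀ <| by
          exact_mod_cast card_pos.2 ⟨u, (mem_filter.1 hv).2.2⟩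
      _ ≤ 2 := by simp only [sum_const, nsmul_one]; exact_mod_cast h2
      _ ≤ _ := by linarith
  · simp only [not_exists, not_and] at hone
    have hcard : S.card ≤ 2 * deg E u :=
      (card_le_card hS).trans ((card_filter_le _ _).trans (hlin.card_nbr u).le)
    calc _ ≤ ∑ _v ∈ S, (2 : ℚ)⁻¹ := sum_le_sum fun v hv => by
          have huv := (mem_filter.1 hv).2.2
          have : 1 < (lowNbr E v).card := by
            by_contra! h
            exact hone v hv (eq_singleton_iff_unique_mem.2 ⟨huv, fun w hw =>
              card_le_one.1 h w hw u huv⟩)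
          exact inv_anti₀ two_pos (by exact_mod_cast this)
      _ ≤ deg E u := by
          simp only [sum_const, nsmul_eq_mul]
          have : (S.card : ℚ) ≤ 2 * deg E u := by exact_mod_cast hcard
          linarith
      _ ≤ _ := by linarith

lemma card_lowNbr_ne_empty_le :
    (((univ.filter (deg E · = 5)).filter (lowNbr E · ≠ ∅)).card : ℚ) ≤
      ∑ u ∈ univ.filter (deg E · ≤ 3), (9 - 2 * (deg E u : ℚ)) :=
  calc _ = ∑ v ∈ (univ.filter (deg E · = 5)).filter (lowNbr E · ≠ ∅),
        ∑ _u ∈ lowNbr E v, ((lowNbr E v).card : ℚ)⁻¹ := by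
        rw [card_eq_sum_ones, Nat.cast_sum]
        refine sum_congr rfl fun v hv => ?_
        have : ((lowNbr E v).card : ℚ) ≠ 0 := by
          simpa [card_eq_zero] using (mem_filter.1 hv).2
        rw [sum_const, nsmul_eq_mul, mul_inv_cancel₀ this, Nat.cast_one]
    _ = ∑ u ∈ univ.filter (deg E · ≤ 3),
        ∑ v ∈ univ.filter (fun v => deg E v = 5 ∧ u ∈ lowNbr E v), ((lowNbr E v).card : ℚ)⁻¹ :=
        sum_comm' fun v u => by
          simp only [lowNbr, mem_filter, mem_univ, true_and, ← nonempty_iff_ne_empty]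
          exact ⟨fun h => ⟨⟨h.1.1, h.2⟩, h.2.2⟩, fun h => ⟨⟨h.1.1, u, mem_filter.2 h.1.2⟩, h.1.2⟩⟩
    _ ≤ _ := sum_le_sum fun u hu => hlin.sum_inv_card_lowNbr_le hcf (mem_filter.1 hu).2

lemma two_mul_sum_deg_le (hdeg : ∀ u, deg E u ≤ 5) :
    2 * ∑ v, (deg E v : ℚ) ≤ 9 * Fintype.card V := by
  have hsplit (v : V) : 9 - 2 * (deg E v : ℚ) = (if deg E v ≤ 3 then 9 - 2 * (deg E v : ℚ) else 0)
      + (if deg E v = 4 then 1 else 0) - (if deg E v = 5 then 1 else 0) := by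
    have := hdeg v
    interval_cases deg E v <;> norm_num
  have hcharge : 0 ≤ ∑ v, (9 - 2 * (deg E v : ℚ)) := by
    rw [sum_congr rfl fun v _ => hsplit v, sum_sub_distrib, sum_add_distrib, ← sum_filter,
      sum_boole, sum_boole]
    have h5 := card_filter_add_card_filter_not (s := univ.filter (deg E · = 5))
      (fun v => lowNbr E v = ∅)
    have hempty : (((univ.filter (deg E · = 5)).filter (lowNbr E · = ∅)).card : ℚ) ≤
        (univ.filter (deg E · = 4)).card := by
      exact_mod_cast hlin.card_lowNbr_eq_empty_le hcf
    have hnonempty := hlin.card_lowNbr_ne_empty_le hcf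
    have : ((univ.filter (deg E · = 5)).card : ℚ) = _ := congrArg (Nat.cast (R := ℚ)) h5.symm
    push_cast at this
    linarith
  rw [sum_sub_distrib, sum_const, card_univ, nsmul_eq_mul, ← mul_sum] at hcharge
  linarith

end Fintype

end Linear3

end

theorem stmt_19 {V : Type*} [Fintype V] [DecidableEq V] (E : Finset (Finset V))
    (hlin : Linear3 E) (hcf : ¬ HasCrown E) (hdeg : ∀ v : V, deg E v ≤ 5) :
    (E.card : ℚ) ≤ 3 * (Fintype.card V : ℚ) / 2 ∧
      3 * (E.card : ℚ) / (Fintype.card V : ℚ) ≤ 9 / 2 := by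
  have hsum : ∑ v, (deg E v : ℚ) = 3 * E.card := by exact_mod_cast hlin.sum_deg
  have h := hlin.two_mul_sum_deg_le hcf hdeg
  have hE : (E.card : ℚ) ≤ 3 * (Fintype.card V : ℚ) / 2 := by linarith
  refine ⟨hE, ?_⟩
  rcases (Fintype.card V).eq_zero_or_pos with hn | hn
  · norm_num [hn]
  · rw [div_le_iff₀ (by exact_mod_cast hn)]
    linarith
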